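/- Let p(z) = Σ_{j=0}^n a_j z^j be a complex polynomial of degree n that is at least a trinomial, and let k be the smallest positive integer with a_{n-k} ≠ 0. Define q_2(z) = (a_n z^{2k} − a_{n-k} z^k + a_{n-k}^2 / a_n) p(z). Then ρ[q_2] ≤ ρ[p]. -/

import Mathlib

/-!
Write `W(f, y) = ∑ ‖f_j‖ y^j`, so that `cauchyFun f y = 2 ‖lc f‖ y^{deg f} - W(f, y)`, and split
`p = a zⁿ + b z^{n-k} + r` with `a = aₙ`, `b = a_{n-k}`. The multiplier
`g = a z^{2k} - b z^k + b²/a` satisfies `a · g · (a z^k + b) = a³ z^{3k} + b³`, so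
`q₂ = a² z^{n+2k} + (b³/a) z^{n-k} + g r`. At the Cauchy radius `y` of `p` we have
`W(r, y) = ‖a‖ yⁿ - ‖b‖ y^{n-k}`, and the triangle inequality bounds `W(q₂, y)` by
`‖a‖² y^{n+2k} + (‖b‖³/‖a‖) y^{n-k} + W(g, y) W(r, y)`, which the same sum-of-cubes identity for
the norms collapses to `2 ‖a‖² y^{n+2k}`. Hence `cauchyFun q₂ y ≥ 0`, and `y` lies at or beyond
the positive root of `cauchyFun q₂`, because `cauchyFun q t / t^{deg q}` is strictly increasing
in `t > 0` unless `q` is a monomial.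
-/

open Polynomial

/-- The function whose unique positive root is the Cauchy radius of `q`. -/
noncomputable def cauchyFun (q : Polynomial ℂ) (x : ℝ) : ℝ :=
  ‖q.leadingCoeff‖ * x ^ q.natDegree
    - ∑ j ∈ Finset.range q.natDegree, ‖q.coeff j‖ * x ^ j

open Finset

namespace Polynomial

section NormEval

variable {R : Type*} [NormedRing R]

noncomputable def normEval (f : R[X]) (y : ℝ) : ℝ := f.sum fun j c => ‖c‖ * y ^ j

theorem normEval_eq_sum_range {f : R[X]} {D : ℕ} (hD : f.natDegree < D) (y : ℝ) :
    normEval f y = ∑ j ∈ range D, ‖f.coeff j‖ * y ^ j :=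
  sum_over_range' f (by simp) D hD

theorem normEval_add_le (f g : R[X]) {y : ℝ} (hy : 0 ≤ y) :
    normEval (f + g) y ≤ normEval f y + normEval g y := by
  set D := max (f + g).natDegree (max f.natDegree g.natDegree) + 1
  rw [normEval_eq_sum_range (D := D) (by omega), normEval_eq_sum_range (D := D) (by omega),
    normEval_eq_sum_range (D := D) (by omega), ← sum_add_distrib]
  gcongr with j
  rw [← add_mul, coeff_add]
  gcongr
  exact norm_add_le _ _

@[simp]
theorem normEval_neg (f : R[X]) (y : ℝ) : normEval (-f) y = normEval f y := by
  simp [normEval, Polynomial.sum_def]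

theorem normEval_sub_le (f g : R[X]) {y : ℝ} (hy : 0 ≤ y) :
    normEval (f - g) y ≤ normEval f y + normEval g y := by
  simpa [sub_eq_add_neg] using normEval_add_le f (-g) hy

theorem normEval_add_C_mul_X_pow {f : R[X]} {m : ℕ} (hf : f.coeff m = 0) (c : R) (y : ℝ) :
    normEval (f + C c * X ^ m) y = normEval f y + ‖c‖ * y ^ m := by
  set D := max (f + C c * X ^ m).natDegree (max f.natDegree m) + 1
  rw [normEval_eq_sum_range (D := D) (by omega), normEval_eq_sum_range (D := D) (by omega)]
  have hmD : m ∈ range D := mem_range.2 (by omega)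
  rw [← add_sum_erase _ _ hmD, ← add_sum_erase _ _ hmD]
  have hoff : ∀ j ∈ (range D).erase m,
      ‖(f + C c * X ^ m).coeff j‖ * y ^ j = ‖f.coeff j‖ * y ^ j := fun j hj => by
    simp [(mem_erase.1 hj).1]
  rw [sum_congr rfl hoff]
  simp [hf]
  ring

theorem normEval_C_mul_X_pow (c : R) (m : ℕ) (y : ℝ) :
    normEval (C c * X ^ m) y = ‖c‖ * y ^ m := by
  simpa [normEval] using normEval_add_C_mul_X_pow (coeff_zero m) c y

theorem normEval_sub_C_mul_X_pow_sub_C_mul_X_pow (f : R[X]) {i j : ℕ} (hij : i ≠ j) (y : ℝ) :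
    normEval (f - C (f.coeff i) * X ^ i - C (f.coeff j) * X ^ j) y =
      normEval f y - ‖f.coeff i‖ * y ^ i - ‖f.coeff j‖ * y ^ j := by
  set r := f - C (f.coeff i) * X ^ i - C (f.coeff j) * X ^ j
  have hrj : r.coeff j = 0 := by simp [r, hij.symm]
  have hri : (r + C (f.coeff j) * X ^ j).coeff i = 0 := by simp [r]
  calc normEval r y = normEval (r + C (f.coeff j) * X ^ j + C (f.coeff i) * X ^ i) y
        - ‖f.coeff i‖ * y ^ i - ‖f.coeff j‖ * y ^ j := by
        rw [normEval_add_C_mul_X_pow hri, normEval_add_C_mul_X_pow hrj]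
        ring
    _ = normEval f y - ‖f.coeff i‖ * y ^ i - ‖f.coeff j‖ * y ^ j := by
        rw [show r + C (f.coeff j) * X ^ j + C (f.coeff i) * X ^ i = f by simp only [r]; abel]

theorem normEval_X_pow_mul (m : ℕ) (f : R[X]) (y : ℝ) :
    normEval (X ^ m * f) y = y ^ m * normEval f y := by
  set D := f.natDegree + 1
  rw [normEval_eq_sum_range (D := m + D), normEval_eq_sum_range (D := D) (lt_add_one _), mul_sum,
    sum_range_add]
  · have hlow : ∀ j ∈ range m, ‖(X ^ m * f).coeff j‖ * y ^ j = 0 := fun j hj => by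
      simp [coeff_X_pow_mul', not_le.2 (mem_range.1 hj)]
    rw [sum_eq_zero hlow, zero_add]
    refine sum_congr rfl fun j _ => ?_
    rw [add_comm m j, coeff_X_pow_mul, pow_add]
    ring
  · exact natDegree_mul_le.trans_lt (by have := natDegree_X_pow_le (R := R) m; omega)

theorem normEval_C_mul [NormMulClass R] (c : R) (f : R[X]) (y : ℝ) :
    normEval (C c * f) y = ‖c‖ * normEval f y := by
  rw [normEval_eq_sum_range (D := f.natDegree + 1), normEval_eq_sum_range (lt_add_one _), mul_sum]
  · simp only [coeff_C_mul, norm_mul, mul_assoc]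
  · exact natDegree_C_mul_le c f |>.trans_lt (lt_add_one _)

end NormEval

section CauchyMultiplier

variable {R : Type*} [Ring R]

noncomputable def cauchyMultiplier (a b c : R) (k : ℕ) : R[X] :=
  C a * X ^ (2 * k) - C b * X ^ k + C c

theorem natDegree_cauchyMultiplier {a : R} (ha : a ≠ 0) (b c : R) {k : ℕ} (hk : 0 < k) :
    (cauchyMultiplier a b c k).natDegree = 2 * k := by
  unfold cauchyMultiplier
  compute_degree!
  · simpa [show 2 * k ≠ k by omega, hk.ne'] using ha
  all_goals omega

theorem leadingCoeff_cauchyMultiplier {a : R} (ha : a ≠ 0) (b c : R) {k : ℕ} (hk : 0 < k) :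
    (cauchyMultiplier a b c k).leadingCoeff = a := by
  rw [leadingCoeff, natDegree_cauchyMultiplier ha b c hk, cauchyMultiplier]
  simp [coeff_C, show 2 * k ≠ k by omega, show 2 * k ≠ 0 by omega]

theorem cauchyMultiplier_ne_zero {a : R} (ha : a ≠ 0) (b c : R) {k : ℕ} (hk : 0 < k) :
    cauchyMultiplier a b c k ≠ 0 :=
  leadingCoeff_ne_zero.1 (by rwa [leadingCoeff_cauchyMultiplier ha b c hk])

theorem cauchyMultiplier_mul_eq {A : Type*} [CommRing A] {a b c : A} (habc : a * c = b ^ 2)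
    (k m : ℕ) (r : A[X]) :
    cauchyMultiplier a b c k * (C a * X ^ (m + k) + C b * X ^ m + r) =
      C (a ^ 2) * X ^ (m + 3 * k) + C (b * c) * X ^ m + cauchyMultiplier a b c k * r := by
  have hC : C a * C c = C b ^ 2 := by rw [← C_mul, habc, C_pow]
  simp only [cauchyMultiplier, C_mul, C_pow]
  linear_combination X ^ (m + k) * hC

theorem normEval_cauchyMultiplier_mul_le {K : Type*} [NormedField K] {a b c : K}
    (habc : a * c = b ^ 2) (k m : ℕ) (r : K[X]) {y : ℝ} (hy : 0 ≤ y) :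
    normEval (cauchyMultiplier a b c k * (C a * X ^ (m + k) + C b * X ^ m + r)) y ≤
      ‖a‖ ^ 2 * y ^ (m + 3 * k) + ‖b‖ * ‖c‖ * y ^ m +
        (‖a‖ * y ^ (2 * k) + ‖b‖ * y ^ k + ‖c‖) * normEval r y := by
  have hgr : cauchyMultiplier a b c k * r =
      C a * (X ^ (2 * k) * r) - C b * (X ^ k * r) + C c * r := by
    rw [cauchyMultiplier]
    ring
  rw [cauchyMultiplier_mul_eq habc, hgr]
  have h₁ := normEval_add_le (C (a ^ 2) * X ^ (m + 3 * k) + C (b * c) * X ^ m)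
    (C a * (X ^ (2 * k) * r) - C b * (X ^ k * r) + C c * r) hy
  have h₂ := normEval_add_le (C (a ^ 2) * X ^ (m + 3 * k)) (C (b * c) * X ^ m) hy
  have h₃ := normEval_add_le (C a * (X ^ (2 * k) * r) - C b * (X ^ k * r)) (C c * r) hy
  have h₄ := normEval_sub_le (C a * (X ^ (2 * k) * r)) (C b * (X ^ k * r)) hy
  rw [normEval_C_mul_X_pow, normEval_C_mul_X_pow, norm_pow, norm_mul] at h₂
  simp only [normEval_C_mul, normEval_X_pow_mul] at h₃ h₄
  linarith

end CauchyMultiplier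

end Polynomial

theorem pow_mul_pow_lt_pow_mul_pow {α : Type*} [CommSemiring α] [LinearOrder α]
    [IsStrictOrderedRing α] {x y : α} (hy : 0 < y) (hyx : y < x) {i j : ℕ} (hij : i < j) :
    y ^ j * x ^ i < y ^ i * x ^ j := by
  obtain ⟨d, rfl⟩ := Nat.exists_eq_add_of_lt hij
  have hd : y ^ (d + 1) < x ^ (d + 1) := pow_lt_pow_left₀ hyx hy.le d.succ_ne_zero
  calc y ^ (i + d + 1) * x ^ i = y ^ i * x ^ i * y ^ (d + 1) := by ring
    _ < y ^ i * x ^ i * x ^ (d + 1) :=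
      mul_lt_mul_of_pos_left hd (mul_pos (pow_pos hy i) (pow_pos (hy.trans hyx) i))
    _ = y ^ i * x ^ (i + d + 1) := by ring

theorem cauchyFun_eq (q : ℂ[X]) (y : ℝ) :
    cauchyFun q y = 2 * ‖q.leadingCoeff‖ * y ^ q.natDegree - q.normEval y := by
  rw [cauchyFun, normEval_eq_sum_range (lt_add_one _), sum_range_succ, coeff_natDegree]
  ring

theorem cauchyFun_neg_of_lt {q : ℂ[X]} (hq : q ≠ 0) {x y : ℝ} (hy : 0 < y) (hyx : y < x)
    (hx : cauchyFun q x = 0) : cauchyFun q y < 0 := by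
  set N := q.natDegree
  have hx₀ : 0 < x := hy.trans hyx
  have hxN : 0 < ‖q.leadingCoeff‖ * x ^ N :=
    mul_pos (norm_pos_iff.2 (leadingCoeff_ne_zero.2 hq)) (pow_pos hx₀ N)
  have hsum : ∑ j ∈ range N, ‖q.coeff j‖ * x ^ j = ‖q.leadingCoeff‖ * x ^ N := by
    rw [cauchyFun] at hx
    linarith
  obtain ⟨j₀, hj₀, hcoeff⟩ : ∃ j ∈ range N, q.coeff j ≠ 0 := by
    by_contra! h
    rw [sum_eq_zero fun j hj => by simp [h j hj]] at hsum
    linarith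
  have key : x ^ N * (‖q.leadingCoeff‖ * y ^ N) < x ^ N * ∑ j ∈ range N, ‖q.coeff j‖ * y ^ j :=
    calc x ^ N * (‖q.leadingCoeff‖ * y ^ N) = y ^ N * (‖q.leadingCoeff‖ * x ^ N) := by ring
      _ = ∑ j ∈ range N, ‖q.coeff j‖ * (y ^ N * x ^ j) := by
          rw [← hsum, mul_sum]
          exact sum_congr rfl fun j _ => by ring
      _ < ∑ j ∈ range N, ‖q.coeff j‖ * (y ^ j * x ^ N) := by
          refine sum_lt_sum (fun j hj => ?_) ⟨j₀, hj₀, ?_⟩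
          · exact mul_le_mul_of_nonneg_left
              (pow_mul_pow_lt_pow_mul_pow hy hyx (mem_range.1 hj)).le (norm_nonneg _)
          · exact mul_lt_mul_of_pos_left
              (pow_mul_pow_lt_pow_mul_pow hy hyx (mem_range.1 hj₀)) (norm_pos_iff.2 hcoeff)
      _ = x ^ N * ∑ j ∈ range N, ‖q.coeff j‖ * y ^ j := by
          rw [mul_sum]
          exact sum_congr rfl fun j _ => by ring
  have := lt_of_mul_lt_mul_left key (pow_nonneg hx₀.le N)
  rw [cauchyFun]
  linarith

theorem le_of_cauchyFun_eq_zero {q : ℂ[X]} (hq : q ≠ 0) {x y : ℝ} (hy : 0 < y)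
    (hx : cauchyFun q x = 0) (hy₀ : 0 ≤ cauchyFun q y) : x ≤ y :=
  not_lt.1 fun hyx => (cauchyFun_neg_of_lt hq hy hyx hx).not_ge hy₀

theorem cauchyFun_cauchyMultiplier_mul_nonneg {p : ℂ[X]} {n k : ℕ} (hp : p ≠ 0)
    (hn : p.natDegree = n) (hk : 0 < k) (hkn : k ≤ n) {y : ℝ} (hy : 0 ≤ y)
    (hyroot : cauchyFun p y = 0) :
    0 ≤ cauchyFun (cauchyMultiplier (p.coeff n) (p.coeff (n - k))
      (p.coeff (n - k) ^ 2 / p.coeff n) k * p) y := by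
  obtain ⟨m, rfl⟩ : ∃ m, n = m + k := ⟨n - k, by omega⟩
  rw [Nat.add_sub_cancel]
  set a := p.coeff (m + k)
  set b := p.coeff m
  have hlc : p.leadingCoeff = a := by rw [leadingCoeff, hn]
  have ha : a ≠ 0 := hlc ▸ leadingCoeff_ne_zero.2 hp
  have habc : a * (b ^ 2 / a) = b ^ 2 := mul_div_cancel₀ _ ha
  set r := p - C a * X ^ (m + k) - C b * X ^ m
  have hr : r.normEval y = ‖a‖ * y ^ (m + k) - ‖b‖ * y ^ m := by
    rw [normEval_sub_C_mul_X_pow_sub_C_mul_X_pow p (by omega)]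
    rw [cauchyFun_eq, hn, hlc] at hyroot
    linarith
  have hq := normEval_cauchyMultiplier_mul_le habc k m r hy
  rw [show C a * X ^ (m + k) + C b * X ^ m + r = p by ring, hr] at hq
  have hnorm : ‖a‖ * ‖b ^ 2 / a‖ = ‖b‖ ^ 2 := by rw [← norm_mul, habc, norm_pow]
  rw [cauchyFun_eq, natDegree_mul (cauchyMultiplier_ne_zero ha _ _ hk) hp, leadingCoeff_mul,
    natDegree_cauchyMultiplier ha _ _ hk, leadingCoeff_cauchyMultiplier ha _ _ hk, hn, hlc,
    norm_mul, show 2 * k + (m + k) = m + 3 * k by ring]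
  linear_combination hq + y ^ (m + k) * hnorm

theorem improved_cauchy_radius_q2_general
    (p : Polynomial ℂ) (n : ℕ) (hp : p ≠ 0) (hn : p.natDegree = n)
    (k ℓ : ℕ) (hk : 0 < k) (hkl : k + ℓ ≤ n)
    (x y : ℝ) (hy : 0 < y)
    (hxroot : cauchyFun
      ((C (p.coeff n) * X ^ (2 * k) - C (p.coeff (n - k)) * X ^ k
          + C (p.coeff (n - k) ^ 2 / p.coeff n)) * p) x = 0)
    (hyroot : cauchyFun p y = 0) :
    x ≤ y := by
  have ha : p.coeff n ≠ 0 := hn ▸ leadingCoeff_ne_zero.2 hp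
  exact le_of_cauchyFun_eq_zero (mul_ne_zero (cauchyMultiplier_ne_zero ha _ _ hk) hp) hy hxroot
    (cauchyFun_cauchyMultiplier_mul_nonneg hp hn hk (by omega) hy.le hyroot)

/-- For the multiplier `aₙ z^{2k} - a_{n-k} z^k + a_{n-k}²/aₙ`,
the Cauchy radius of `q₂` is at most that of `p`. -/
theorem improved_cauchy_radius_q2
    (p : Polynomial ℂ) (n : ℕ) (hp : p ≠ 0) (hn : p.natDegree = n)
    (k ℓ : ℕ) (hk : 0 < k) (hℓ : 0 < ℓ) (hkl : k + ℓ ≤ n)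
    (hknz : p.coeff (n - k) ≠ 0)
    (hkmin : ∀ j, 0 < j → j < k → p.coeff (n - j) = 0)
    (hlnz : p.coeff (n - k - ℓ) ≠ 0)
    (hlmin : ∀ j, 0 < j → j < ℓ → p.coeff (n - k - j) = 0)
    (x y : ℝ) (hx : 0 < x) (hy : 0 < y)
    (hxroot : cauchyFun
      ((C (p.coeff n) * X ^ (2 * k) - C (p.coeff (n - k)) * X ^ k
          + C (p.coeff (n - k) ^ 2 / p.coeff n)) * p) x = 0)
    (hyroot : cauchyFun p y = 0) :
    x ≤ y :=
  improved_cauchy_radius_q2_general p n hp hn k ℓ hk hkl x y hy hxroot hyroot
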